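/- Let f(x) = γ(x − c) + c with 0 < γ < 1, 0 < c < 1, be a linear contraction of [0,1], and let P_n be the Ulam matrix of f with respect to the partition of [0,1] into n equal intervals, p_{ij} = m(Δ_i ∩ f^{-1}Δ_j)/m(Δ_i). Assume n is large enough that at least two partition intervals lie on each side of the interval containing c (e.g. 2/n < c < 1 − 2/n). Let δ := n · dist(c, (1/n)ℤ) ∈ [0, 1/2] be n times the distance from c to the nearest partition point. Then P_n is triangular with respect to a suitable ordering of the partition intervals, so its eigenvalues are its diagonal entries, and the modulus of its second largest spectral value is r̃₂(δ) = 2 − 1/γ if δ = 0 and γ > 1/2; r̃₂(δ) = 1 − δ(1/γ − 1) if 0 < δ ≤ γ/(1−γ); and r̃₂(δ) = 0 otherwise. -/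

import Mathlib

open MeasureTheory Set

lemma aux_det_blockTriangular {n : ℕ} (M : Matrix (Fin n) (Fin n) ℂ) (b : Fin n → ℕ)
    (hb : Function.Injective b) (h : M.BlockTriangular b) : M.det = ∏ i, M i i := by
  rw [h.det, Finset.prod_image (fun x _ y _ hxy => hb hxy)]
  refine Finset.prod_congr rfl fun i _ => ?_
  haveI : Unique {a // b a = b i} := ⟨⟨⟨i, rfl⟩⟩, by rintro ⟨j, hj⟩; exact Subtype.ext (hb hj)⟩
  rw [Matrix.det_unique]
  have hd : ((default : {a // b a = b i}) : Fin n) = i :=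
    congrArg Subtype.val (Subsingleton.elim _ (⟨i, rfl⟩ : {a // b a = b i}))
  rw [Matrix.toSquareBlock_def]
  simp [hd]

lemma aux_spectrum {n : ℕ} (M : Matrix (Fin n) (Fin n) ℂ) (b : Fin n → ℕ)
    (hb : Function.Injective b) (h : M.BlockTriangular b) :
    spectrum ℂ M = {τ : ℂ | ∃ i, τ = M i i} := by
  ext τ
  rw [spectrum.mem_iff, Matrix.isUnit_iff_isUnit_det, isUnit_iff_ne_zero, not_ne_iff]
  have htri : (algebraMap ℂ (Matrix (Fin n) (Fin n) ℂ) τ - M).BlockTriangular b := by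
    rw [Matrix.algebraMap_eq_diagonal]
    exact (Matrix.blockTriangular_diagonal _).sub h
  rw [aux_det_blockTriangular _ b hb htri, Finset.prod_eq_zero_iff]
  simp [Matrix.algebraMap_eq_diagonal, sub_eq_zero, eq_comm]

set_option maxHeartbeats 2000000 in
/-- Ulam approximation of the linear contraction `f(x) = γ(x−c)+c` of `[0,1]` with
respect to the partition into `n` equal intervals, assuming at least two partition
intervals lie on each side of the interval containing `c` (`2/n < c < 1 − 2/n`).
With `δ = n·dist(c, (1/n)ℤ)`, the Ulam matrix is triangular with respect to a suitable
ordering of the partition intervals (so its eigenvalues are its diagonal entries), and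
the modulus `r̃₂` of its second largest spectral value equals `2 − 1/γ` if `δ = 0` and
`γ > 1/2`; `1 − δ(1/γ − 1)` if `0 < δ ≤ γ/(1−γ)`; and `0` otherwise. -/
theorem ulam_contraction_second_eigenvalue
    (γ c : ℝ) (hγ : γ ∈ Set.Ioo (0 : ℝ) 1) (hc : c ∈ Set.Ioo (0 : ℝ) 1)
    (f : ℝ → ℝ) (hf : ∀ x, f x = γ * (x - c) + c)
    (n : ℕ) [NeZero n] (hn : 2 / (n : ℝ) < c ∧ c < 1 - 2 / (n : ℝ))
    (Δ : Fin n → Set ℝ)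
    (hΔ : ∀ i, Δ i = Set.Ico (((i : ℕ) : ℝ) / n) ((((i : ℕ) : ℝ) + 1) / n))
    (P : Matrix (Fin n) (Fin n) ℝ)
    (hP : ∀ i j, P i j = (volume (Δ i ∩ f ⁻¹' Δ j)).toReal / (volume (Δ i)).toReal)
    (δ : ℝ) (hδ : δ = |((round (c * (n : ℝ)) : ℤ) : ℝ) - c * (n : ℝ)|)
    (r2 : ℝ)
    (hr2 : r2 = sSup {x : ℝ | ∃ τ ∈ spectrum ℂ (P.map Complex.ofReal), ‖τ‖ < 1 ∧ x = ‖τ‖}) :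
    (∃ b : Fin n → ℕ, Function.Injective b ∧ P.BlockTriangular b) ∧
    spectrum ℂ (P.map Complex.ofReal) = {τ : ℂ | ∃ i : Fin n, τ = (P i i : ℂ)} ∧
    ((δ = 0 ∧ 1 / 2 < γ) → r2 = 2 - 1 / γ) ∧
    ((0 < δ ∧ δ ≤ γ / (1 - γ)) → r2 = 1 - δ * (1 / γ - 1)) ∧
    ((¬(δ = 0 ∧ 1 / 2 < γ) ∧ ¬(0 < δ ∧ δ ≤ γ / (1 - γ))) → r2 = 0) := by
  obtain ⟨hγ0, hγ1⟩ := hγ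
  obtain ⟨hc0, hc1⟩ := hc
  have hn0 : (0:ℝ) < n := by
    have := NeZero.pos n
    exact_mod_cast this
  set u : ℝ := c * n with hu
  have hu2 : 2 < u := by
    rw [hu]
    rw [div_lt_iff₀ hn0] at hn
    linarith [hn.1]
  have hun : u < n - 2 := by
    have h2 := hn.2
    have h3 : c * n < (1 - 2/(n:ℝ)) * n := by
      apply mul_lt_mul_of_pos_right h2 hn0
    rw [hu]
    have : (1 - 2/(n:ℝ)) * n = n - 2 := by field_simp
    linarith
  set k : ℕ := ⌊u⌋₊ with hk
  have hk1 : (k:ℝ) ≤ u := Nat.floor_le (by linarith)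
  have hk2 : u < (k:ℝ) + 1 := Nat.lt_floor_add_one u
  have hk_ge : 2 ≤ k := Nat.le_floor (by exact_mod_cast hu2.le)
  have hk_le : k + 3 ≤ n := by
    have : (k:ℝ) < (n:ℝ) - 2 := lt_of_le_of_lt hk1 hun
    have : (k:ℝ) + 2 < (n:ℝ) := by linarith
    exact_mod_cast (by exact_mod_cast this : (k + 2 : ℕ) < n)
  set β : ℝ := 1/γ - 1 with hβ
  have hβ0 : 0 < β := by
    rw [hβ]
    have : 1 < 1/γ := (one_lt_div hγ0).mpr hγ1
    linarith
  set ψ : ℝ → ℝ := fun t => (t - u)/γ + u with hψdef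
  have hψ_eq : ∀ t, ψ t = t + (t - u)*β := by
    intro t
    rw [hψdef, hβ]
    field_simp
    ring
  have hψ_ge : ∀ t, u ≤ t → t ≤ ψ t := by
    intro t ht; rw [hψ_eq]; nlinarith
  have hψ_le : ∀ t, t ≤ u → ψ t ≤ t := by
    intro t ht; rw [hψ_eq]; nlinarith
  -- entry formula
  have hPij : ∀ i j : Fin n, P i j =
      max (min (((i:ℕ):ℝ) + 1) (ψ (((j:ℕ):ℝ) + 1)) - max ((i:ℕ):ℝ) (ψ ((j:ℕ):ℝ))) 0 := by
    have hiff1 : ∀ a x : ℝ, (a ≤ γ*(x-c)+c ↔ (a-c)/γ + c ≤ x) := by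
      intro a x
      constructor
      · intro h
        have h' : (a-c)/γ ≤ x - c := (div_le_iff₀ hγ0).mpr (by rw [mul_comm]; linarith)
        linarith
      · intro h
        have h' : a - c ≤ (x-c)*γ := (div_le_iff₀ hγ0).mp (by linarith)
        nlinarith
    have hiff2 : ∀ b x : ℝ, (γ*(x-c)+c < b ↔ x < (b-c)/γ + c) := by
      intro b x
      constructor
      · intro h
        have h' : x - c < (b-c)/γ := (lt_div_iff₀ hγ0).mpr (by rw [mul_comm]; linarith)
        linarith
      · intro h
        have h' : (x-c)*γ < b - c := (lt_div_iff₀ hγ0).mp (by linarith)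
        nlinarith
    have hscale : ∀ t : ℝ, ψ t / n = (t/n - c)/γ + c := by
      intro t; rw [hψdef, hu]; field_simp
    have htoReal : ∀ x : ℝ, (ENNReal.ofReal x).toReal = max x 0 := by
      intro x
      rcases le_total x 0 with h|h
      · rw [ENNReal.ofReal_eq_zero.mpr h, ENNReal.toReal_zero, max_eq_right h]
      · rw [ENNReal.toReal_ofReal h, max_eq_left h]
    intro i j
    have hpre : f ⁻¹' (Ico (((j:ℕ):ℝ)/n) (((((j:ℕ)):ℝ)+1)/n)) =
        Ico (ψ ((j:ℕ):ℝ) / n) (ψ (((j:ℕ):ℝ)+1) / n) := by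
      ext x
      simp only [mem_preimage, mem_Ico, hf]
      rw [hscale, hscale]
      exact and_congr (hiff1 _ _) (hiff2 _ _)
    rw [hP, hΔ, hΔ, hpre, Set.Ico_inter_Ico, Real.volume_Ico, Real.volume_Ico]
    rw [max_div_div_right hn0.le, min_div_div_right hn0.le, div_sub_div_same]
    have e2 : ((((i:ℕ):ℝ) + 1)/n - ((i:ℕ):ℝ)/n) = 1/n := by ring
    rw [e2, htoReal, htoReal]
    rw [max_eq_left (by positivity : (0:ℝ) ≤ 1/n)]
    have ecan : ∀ x : ℝ, (max (x/(n:ℝ)) 0)/(1/(n:ℝ)) = max x 0 := by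
      intro x
      rw [one_div, div_inv_eq_mul, max_mul_of_nonneg _ _ hn0.le, div_mul_cancel₀ _ (ne_of_gt hn0), zero_mul]
    rw [ecan]
  -- zero lemmas
  have hz1 : ∀ i j : Fin n, (j:ℕ) < k → (j:ℕ) < (i:ℕ) → P i j = 0 := by
    intro i j hjk hji
    rw [hPij]
    have h1 : ((j:ℕ):ℝ) + 1 ≤ k := by
      have : (j:ℕ) + 1 ≤ k := hjk
      exact_mod_cast this
    have h2 : ((j:ℕ):ℝ) + 1 ≤ (i:ℕ) := by exact_mod_cast hji
    have h3 : ψ (((j:ℕ):ℝ) + 1) ≤ ((j:ℕ):ℝ) + 1 := hψ_le _ (by linarith)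
    have h4 : min (((i:ℕ):ℝ) + 1) (ψ (((j:ℕ):ℝ) + 1)) ≤ ψ (((j:ℕ):ℝ) + 1) := min_le_right _ _
    have h5 : ((i:ℕ):ℝ) ≤ max ((i:ℕ):ℝ) (ψ ((j:ℕ):ℝ)) := le_max_left _ _
    have : min (((i:ℕ):ℝ) + 1) (ψ (((j:ℕ):ℝ) + 1)) - max ((i:ℕ):ℝ) (ψ ((j:ℕ):ℝ)) ≤ 0 := by
      linarith
    exact max_eq_right this
  have hz2 : ∀ i j : Fin n, k < (j:ℕ) → (i:ℕ) < (j:ℕ) → P i j = 0 := by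
    intro i j hjk hij
    rw [hPij]
    have h1 : (k:ℝ) + 1 ≤ ((j:ℕ):ℝ) := by exact_mod_cast hjk
    have h2 : ((i:ℕ):ℝ) + 1 ≤ ((j:ℕ):ℝ) := by exact_mod_cast hij
    have h3 : ((j:ℕ):ℝ) ≤ ψ ((j:ℕ):ℝ) := hψ_ge _ (by linarith)
    have h4 : min (((i:ℕ):ℝ) + 1) (ψ (((j:ℕ):ℝ) + 1)) ≤ ((i:ℕ):ℝ) + 1 := min_le_left _ _
    have h5 : ψ ((j:ℕ):ℝ) ≤ max ((i:ℕ):ℝ) (ψ ((j:ℕ):ℝ)) := le_max_right _ _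
    have : min (((i:ℕ):ℝ) + 1) (ψ (((j:ℕ):ℝ) + 1)) - max ((i:ℕ):ℝ) (ψ ((j:ℕ):ℝ)) ≤ 0 := by
      linarith
    exact max_eq_right this
  -- diagonal values
  have hdk : ∀ i : Fin n, (i:ℕ) = k → P i i = 1 := by
    intro i hi
    rw [hPij, hi]
    rw [min_eq_left (hψ_ge _ (by linarith)), max_eq_left (hψ_le _ (by push_cast; linarith))]
    norm_num
  have hdr : ∀ i : Fin n, k < (i:ℕ) → P i i = max (1 - (((i:ℕ):ℝ) - u)*β) 0 := by
    intro i hi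
    have h1 : (k:ℝ) + 1 ≤ ((i:ℕ):ℝ) := by exact_mod_cast hi
    rw [hPij]
    rw [min_eq_left (by nlinarith [hψ_ge (((i:ℕ):ℝ)+1) (by linarith)]),
        max_eq_right (hψ_ge _ (by linarith))]
    rw [hψ_eq]; ring_nf
  have hdl : ∀ i : Fin n, (i:ℕ) < k → P i i = max (1 - (u - (((i:ℕ):ℝ) + 1))*β) 0 := by
    intro i hi
    have h1 : ((i:ℕ):ℝ) + 1 ≤ (k:ℝ) := by exact_mod_cast hi
    rw [hPij]
    rw [min_eq_right (by nlinarith [hψ_le (((i:ℕ):ℝ)+1) (by linarith)]),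
        max_eq_left (hψ_le _ (by linarith))]
    rw [hψ_eq]; ring_nf
  -- ordering
  set b : Fin n → ℕ := fun i => if (i:ℕ) ≤ k then n - 1 - k + (i:ℕ) else n - 1 - (i:ℕ) with hb
  have hbinj : Function.Injective b := by
    intro i j hij
    have hi := i.isLt; have hj := j.isLt
    simp only [hb] at hij
    apply Fin.ext
    split_ifs at hij <;> omega
  have hbtri : P.BlockTriangular b := by
    intro i j hji
    have hi := i.isLt
    have hj := j.isLt
    simp only [hb] at hji
    rcases lt_trichotomy (j:ℕ) k with h|h|h
    · exact hz1 i j h (by split_ifs at hji <;> omega)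
    · exfalso
      split_ifs at hji <;> omega
    · exact hz2 i j h (by split_ifs at hji <;> omega)
  have hmaptri : (P.map Complex.ofReal).BlockTriangular b := by
    intro i j hji
    simp only [Matrix.map_apply, hbtri hji, Complex.ofReal_zero]
  have hspec : spectrum ℂ (P.map Complex.ofReal) = {τ : ℂ | ∃ i : Fin n, τ = (P i i : ℂ)} := by
    rw [aux_spectrum (P.map Complex.ofReal) b hbinj hmaptri]
    ext τ
    simp [Matrix.map_apply]
  -- fractional part
  set θ : ℝ := u - k with hθ
  have hθ0 : 0 ≤ θ := by rw [hθ]; linarith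
  have hθ1 : θ < 1 := by rw [hθ]; linarith
  have hδmin : δ = min θ (1 - θ) := by
    rcases lt_or_ge θ (1/2) with h|h
    · have hr : round u = (k:ℤ) := by
        rw [round_eq, Int.floor_eq_iff]
        push_cast
        constructor <;> [linarith; linarith]
      rw [hδ, hr, min_eq_left (by linarith)]
      rw [abs_of_nonpos (by push_cast; linarith)]
      push_cast
      rw [hθ]; ring
    · have hr : round u = (k:ℤ) + 1 := by
        rw [round_eq, Int.floor_eq_iff]
        push_cast
        constructor <;> [linarith; linarith]
      rw [hδ, hr, min_eq_right (by linarith)]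
      rw [abs_of_nonneg (by push_cast; linarith)]
      push_cast
      rw [hθ]; ring
  have hδ0 : 0 ≤ δ := by rw [hδmin]; exact le_min hθ0 (by linarith)
  have hδθ : δ ≤ θ := by rw [hδmin]; exact min_le_left _ _
  have hδθ' : δ ≤ 1 - θ := by rw [hδmin]; exact min_le_right _ _
  have hδzero : δ = 0 → θ = 0 := by
    intro h
    rw [hδmin] at h
    rcases min_eq_iff.mp h with ⟨h1,_⟩|⟨h1,_⟩ <;> linarith
  -- upper bounds
  have hub1 : ∀ i : Fin n, (i:ℕ) ≠ k → P i i ≤ max (1 - δ*β) 0 := by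
    intro i hik
    rcases lt_trichotomy (i:ℕ) k with h|h|h
    · rw [hdl i h]
      have h1 : ((i:ℕ):ℝ) + 1 ≤ (k:ℝ) := by exact_mod_cast h
      exact max_le_max (by nlinarith) le_rfl
    · exact absurd h hik
    · rw [hdr i h]
      have h1 : (k:ℝ) + 1 ≤ ((i:ℕ):ℝ) := by exact_mod_cast h
      exact max_le_max (by nlinarith) le_rfl
  have hub2 : θ = 0 → ∀ i : Fin n, (i:ℕ) ≠ k → (i:ℕ) + 1 ≠ k → P i i ≤ max (1 - β) 0 := by
    intro hθz i hik hik1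
    rcases lt_trichotomy (i:ℕ) k with h|h|h
    · rw [hdl i h]
      have h1 : ((i:ℕ):ℝ) + 1 + 1 ≤ (k:ℝ) := by
        have : (i:ℕ) + 1 + 1 ≤ k := by omega
        exact_mod_cast this
      exact max_le_max (by nlinarith) le_rfl
    · exact absurd h hik
    · rw [hdr i h]
      have h1 : (k:ℝ) + 1 ≤ ((i:ℕ):ℝ) := by exact_mod_cast h
      exact max_le_max (by nlinarith) le_rfl
  -- key diagonal values at the neighbours
  have hkR : k < n - 1 := by omega
  have hiR : (k + 1) < n := by omega
  have hiL : (k - 1) < n := by omega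
  have hPR : P ⟨k+1, hiR⟩ ⟨k+1, hiR⟩ = max (1 - (1-θ)*β) 0 := by
    rw [hdr ⟨k+1, hiR⟩ (by simp)]
    congr 2
    push_cast
    rw [hθ]; ring
  have hPL : P ⟨k-1, hiL⟩ ⟨k-1, hiL⟩ = max (1 - θ*β) 0 := by
    rw [hdl ⟨k-1, hiL⟩ (by simp; omega)]
    congr 2
    have : (((k-1 : ℕ)):ℝ) = (k:ℝ) - 1 := by
      have : (1:ℕ) ≤ k := by omega
      push_cast [Nat.cast_sub this]
      ring
    rw [this, hθ]; ring
  -- compute sSup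
  have hsup : ∀ V : ℝ, (∃ i : Fin n, P i i < 1 ∧ V = P i i) →
      (∀ i : Fin n, P i i < 1 → P i i ≤ V) → r2 = V := by
    intro V hmem hub
    have hSE : {x : ℝ | ∃ τ ∈ spectrum ℂ (P.map Complex.ofReal), ‖τ‖ < 1 ∧ x = ‖τ‖} =
        {x : ℝ | ∃ i : Fin n, P i i < 1 ∧ x = P i i} := by
      ext x
      simp only [hspec, mem_setOf_eq]
      have hnorm : ∀ i : Fin n, ‖((P i i : ℝ) : ℂ)‖ = P i i := by
        intro i
        have hnn : 0 ≤ P i i := by rw [hPij]; exact le_max_right _ _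
        rw [Complex.norm_real, Real.norm_eq_abs, abs_of_nonneg hnn]
      constructor
      · rintro ⟨τ, ⟨i, rfl⟩, h1, rfl⟩
        rw [hnorm] at h1 ⊢
        exact ⟨i, h1, rfl⟩
      · rintro ⟨i, h1, rfl⟩
        exact ⟨(P i i : ℂ), ⟨i, rfl⟩, by rw [hnorm]; exact h1, (hnorm i).symm⟩
    rw [hr2, hSE]
    apply IsGreatest.csSup_eq
    refine ⟨hmem, ?_⟩
    rintro x ⟨i, h1, rfl⟩
    exact hub i h1
  have hβγ : β = (1-γ)/γ := by rw [hβ]; field_simp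
  refine ⟨⟨b, hbinj, hbtri⟩, hspec, ?_, ?_, ?_⟩
  · -- δ = 0, 1/2 < γ
    rintro ⟨h0, hg⟩
    have hθz : θ = 0 := hδzero h0
    have hβ1 : β < 1 := by rw [hβγ]; rw [div_lt_one hγ0]; linarith
    have hval : max (1 - β) 0 = 1 - β := max_eq_left (by linarith)
    have : r2 = 1 - β := by
      apply hsup
      · have hrr : (1:ℝ) - (1-0)*β = 1 - β := by ring
        refine ⟨⟨k+1, hiR⟩, ?_, ?_⟩
        · rw [hPR, hθz, hrr, hval]
          linarith
        · rw [hPR, hθz, hrr, hval]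
      · intro i h1
        rcases eq_or_ne (i:ℕ) k with h|h
        · exact absurd (hdk i h) (by rw [hdk i h] at h1; exact absurd h1 (lt_irrefl 1))
        · rcases eq_or_ne ((i:ℕ) + 1) k with h'|h'
          · exfalso
            have := hdl i (by omega)
            rw [this] at h1
            have hu1 : u - (((i:ℕ):ℝ) + 1) = 0 := by
              have : ((i:ℕ):ℝ) + 1 = (k:ℝ) := by exact_mod_cast h'
              rw [this, hθ] at *
              linarith [hθz]
            rw [hu1, zero_mul, sub_zero] at h1
            simp at h1
          · have := hub2 hθz i h h'
            rw [hval] at this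
            exact this
    rw [this, hβ]
    ring
  · -- 0 < δ ≤ γ/(1-γ)
    rintro ⟨hd0, hdle⟩
    have hone : (γ/(1-γ)) * β = 1 := by
      rw [hβγ, div_mul_div_comm, mul_comm γ (1-γ),
          div_self (ne_of_gt (mul_pos (by linarith : (0:ℝ) < 1-γ) hγ0))]
    have hδβ1 : δ*β ≤ 1 := by
      calc δ*β ≤ (γ/(1-γ))*β := mul_le_mul_of_nonneg_right hdle hβ0.le
      _ = 1 := hone
    have hval : max (1 - δ*β) 0 = 1 - δ*β := max_eq_left (by linarith)
    have hlt1 : 1 - δ*β < 1 := by nlinarith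
    have : r2 = 1 - δ*β := by
      apply hsup
      · rcases le_total θ (1-θ) with h|h
        · have hδeq : δ = θ := by rw [hδmin, min_eq_left h]
          refine ⟨⟨k-1, hiL⟩, ?_, ?_⟩
          · rw [hPL, ← hδeq, hval]; exact hlt1
          · rw [hPL, ← hδeq, hval]
        · have hδeq : δ = 1 - θ := by rw [hδmin, min_eq_right h]
          refine ⟨⟨k+1, hiR⟩, ?_, ?_⟩
          · rw [hPR, ← hδeq, hval]; exact hlt1
          · rw [hPR, ← hδeq, hval]
      · intro i h1
        rcases eq_or_ne (i:ℕ) k with h|h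
        · rw [hdk i h] at h1; exact absurd h1 (lt_irrefl 1)
        · have := hub1 i h
          rw [hval] at this
          exact this
    rw [this, hβ]
  · -- remaining cases
    rintro ⟨hn1, hn2⟩
    have hPk1 : θ = 0 → ∀ i : Fin n, (i:ℕ) + 1 = k → P i i = 1 := by
      intro hθz i h'
      rw [hdl i (by omega)]
      have h2 : ((i:ℕ):ℝ) + 1 = (k:ℝ) := by exact_mod_cast h'
      rw [h2]
      have h3 : u - (k:ℝ) = 0 := by rw [hθ] at hθz; linarith
      rw [h3, zero_mul, sub_zero]
      norm_num
    rcases eq_or_lt_of_le hδ0 with hd0|hd0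
    · -- δ = 0, γ ≤ 1/2
      have hd0 : δ = 0 := hd0.symm
      have hθz : θ = 0 := hδzero hd0
      have hγ2 : γ ≤ 1/2 := by
        by_contra hgg
        exact hn1 ⟨hd0, by linarith⟩
      have hβ1 : 1 ≤ β := by
        rw [hβγ, le_div_iff₀ hγ0]
        linarith
      have hval : max (1 - β) 0 = 0 := max_eq_right (by linarith)
      apply hsup
      · have hrr : (1:ℝ) - (1-0)*β = 1 - β := by ring
        refine ⟨⟨k+1, hiR⟩, ?_, ?_⟩
        · rw [hPR, hθz, hrr, hval]; norm_num
        · rw [hPR, hθz, hrr, hval]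
      · intro i h1
        rcases eq_or_ne (i:ℕ) k with h|h
        · rw [hdk i h] at h1; exact absurd h1 (lt_irrefl 1)
        · rcases eq_or_ne ((i:ℕ) + 1) k with h'|h'
          · rw [hPk1 hθz i h'] at h1; exact absurd h1 (lt_irrefl 1)
          · have := hub2 hθz i h h'
            rw [hval] at this
            exact this
    · -- δ > 0, δ > γ/(1-γ)
      have hgt : γ/(1-γ) < δ := by
        by_contra hgg
        exact hn2 ⟨hd0, by linarith⟩
      have hone : (γ/(1-γ)) * β = 1 := by
        rw [hβγ, div_mul_div_comm, mul_comm γ (1-γ),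
          div_self (ne_of_gt (mul_pos (by linarith : (0:ℝ) < 1-γ) hγ0))]
      have hδβ1 : 1 < δ*β := by
        calc (1:ℝ) = (γ/(1-γ))*β := hone.symm
        _ < δ*β := mul_lt_mul_of_pos_right hgt hβ0
      have hval : max (1 - δ*β) 0 = 0 := max_eq_right (by linarith)
      apply hsup
      · rcases le_total θ (1-θ) with h|h
        · have hδeq : δ = θ := by rw [hδmin, min_eq_left h]
          refine ⟨⟨k-1, hiL⟩, ?_, ?_⟩
          · rw [hPL, ← hδeq, hval]; norm_num
          · rw [hPL, ← hδeq, hval]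
        · have hδeq : δ = 1 - θ := by rw [hδmin, min_eq_right h]
          refine ⟨⟨k+1, hiR⟩, ?_, ?_⟩
          · rw [hPR, ← hδeq, hval]; norm_num
          · rw [hPR, ← hδeq, hval]
      · intro i h1
        rcases eq_or_ne (i:ℕ) k with h|h
        · rw [hdk i h] at h1; exact absurd h1 (lt_irrefl 1)
        · have := hub1 i h
          rw [hval] at this
          exact this
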